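/- Let D be a quasi-homogeneous polynomial of total weight n in variables d_1, d_2, … (where d_i has weight i), interpreted as a constant-coefficient differential operator with d_i = ∂/∂p_i. Under the linear change of variables ∂/∂p_i = ∑_{j=1}^{i} C(i-1, j-1) β^{j/2} ∂/∂T_j, the operator D is transformed into β^{n/2} e^{S/√β} D, where S = ∑_{i≥1} i d_i ∂/∂d_{i+1} acts on D viewed as a polynomial in the variables d_i (with d_i now replaced by ∂/∂T_i). -/
import Mathlib


open MvPolynomial

/-- The derivation `S = ∑_{i≥1} i·d_i·∂/∂d_{i+1}` on `K[d_1, d_2, …]`.  Here the variable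
    `X i` stands for `d_{i+1}` (of weight `i+1`), so `S(X 0) = 0` and `S(X i) = i·X (i−1)`. -/
noncomputable def Sder (K : Type*) [Field K] :
    Derivation K (MvPolynomial ℕ K) (MvPolynomial ℕ K) :=
  MvPolynomial.mkDerivation K (fun i => ((i : ℕ) : K) • X (i-1))

open Finset

section Aux

set_option linter.unusedSectionVars false

variable {K : Type*} [Field K] [CharZero K]

/-- The operator `β^{n/2} e^{S/√β}` truncated. -/
noncomputable def Fop (s : K) (n : ℕ) (D : MvPolynomial ℕ K) : MvPolynomial ℕ K :=
  ∑ m ∈ Finset.range (n+1),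
    (s ^ (n - m) * (Nat.factorial m : K)⁻¹) • (((Sder K).toLinearMap ^ m) D)

/-- The substitution. -/
noncomputable def phi (s : K) : ℕ → MvPolynomial ℕ K :=
  fun i : ℕ => ∑ j ∈ Finset.range (i+1),
    MvPolynomial.C ((i.choose j : K) * s^(j+1)) * X j

lemma Sder_X (i : ℕ) : (Sder K) (X i) = ((i : ℕ) : K) • X (i-1) :=
  MvPolynomial.mkDerivation_X _ _ _

lemma Sder_pow_apply (j : ℕ) (R : MvPolynomial ℕ K) :
    (Sder K) (((Sder K).toLinearMap ^ j) R) = ((Sder K).toLinearMap ^ (j+1)) R := by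
  rw [pow_succ', Module.End.mul_apply]
  rfl

lemma Spow_X (m i : ℕ) :
    ((Sder K).toLinearMap ^ m) (X i : MvPolynomial ℕ K)
      = ((i.descFactorial m : K)) • X (i - m) := by
  induction m with
  | zero => simp
  | succ m ih =>
    rw [← Sder_pow_apply, ih, Derivation.map_smul]
    show (↑(i.descFactorial m) : K) • (Sder K) (X (i - m)) = _
    rw [Sder_X, smul_smul, Nat.descFactorial_succ, Nat.cast_mul, mul_comm, Nat.sub_sub]

lemma Spow_X_eq_zero {m i : ℕ} (h : i < m) :
    ((Sder K).toLinearMap ^ m) (X i : MvPolynomial ℕ K) = 0 := by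
  rw [Spow_X, Nat.descFactorial_eq_zero_iff_lt.2 h]
  simp

lemma Spow_one_eq_zero {m : ℕ} (h : 0 < m) :
    ((Sder K).toLinearMap ^ m) (1 : MvPolynomial ℕ K) = 0 := by
  obtain ⟨j, rfl⟩ := Nat.exists_eq_add_of_lt h
  simp only [Nat.zero_add]
  rw [pow_succ, Module.End.mul_apply]
  have h1 : ((Sder K).toLinearMap) (1 : MvPolynomial ℕ K) = 0 := Derivation.map_one_eq_zero _
  rw [h1, map_zero]

lemma Spow_leibniz (m : ℕ) (P Q : MvPolynomial ℕ K) :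
    ((Sder K).toLinearMap ^ m) (P * Q) = ∑ k ∈ range (m+1),
      ((m.choose k : K)) • (((Sder K).toLinearMap ^ k) P * ((Sder K).toLinearMap ^ (m - k)) Q) := by
  set A : ℕ → MvPolynomial ℕ K := fun k => ((Sder K).toLinearMap ^ k) P with hA
  set B : ℕ → MvPolynomial ℕ K := fun k => ((Sder K).toLinearMap ^ k) Q with hB
  induction m with
  | zero => simp [hA, hB]
  | succ m ih =>
    have key : ∀ k ∈ range (m+1),
        (Sder K) ((m.choose k : K) • (A k * B (m-k)))
          = (m.choose k : K) • (A k * B (m+1-k)) + (m.choose k : K) • (A (k+1) * B (m-k)) := by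
      intro k hk
      have hk' : k ≤ m := Nat.lt_succ_iff.mp (mem_range.mp hk)
      rw [Derivation.map_smul, Derivation.leibniz, smul_eq_mul, smul_eq_mul, hA, hB]
      simp only
      rw [Sder_pow_apply, Sder_pow_apply, mul_comm (((Sder K).toLinearMap ^ (m-k)) Q),
        show m - k + 1 = m + 1 - k by omega, smul_add]
    have e0 : ((Sder K).toLinearMap ^ (m+1)) (P * Q)
        = ∑ k ∈ range (m+1), (m.choose k : K) • (A k * B (m+1-k))
          + ∑ k ∈ range (m+1), (m.choose k : K) • (A (k+1) * B (m-k)) := by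
      rw [← Sder_pow_apply, ih, map_sum, Finset.sum_congr rfl key, Finset.sum_add_distrib]
    rw [e0]
    -- now show T = first + second
    have e1 : ∑ k ∈ range (m+2), (m.choose k : K) • (A k * B (m+1-k))
        = ∑ k ∈ range (m+1), (m.choose k : K) • (A k * B (m+1-k)) := by
      rw [Finset.sum_range_succ]
      simp [Nat.choose_succ_self]
    have e2 : ∑ k ∈ range (m+2), (m.choose k : K) • (A k * B (m+1-k))
        = ∑ k ∈ range (m+1), (m.choose (k+1) : K) • (A (k+1) * B (m-k)) + A 0 * B (m+1) := by
      rw [Finset.sum_range_succ' (fun k => (m.choose k : K) • (A k * B (m+1-k))) (m+1)]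
      simp only [Nat.choose_zero_right, Nat.cast_one, one_smul, Nat.sub_zero,
        Nat.add_sub_add_right]
    have e3 : ∀ k ∈ range (m+1),
        (((m+1).choose (k+1) : K)) • (A (k+1) * B (m+1-(k+1)))
          = (m.choose k : K) • (A (k+1) * B (m-k)) + (m.choose (k+1) : K) • (A (k+1) * B (m-k)) := by
      intro k hk
      rw [Nat.choose_succ_succ, Nat.cast_add, add_smul, Nat.add_sub_add_right]
    rw [Finset.sum_range_succ' (fun k => (((m+1).choose k : K)) • (A k * B (m+1-k))) (m+1),
      Finset.sum_congr rfl e3, Finset.sum_add_distrib]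
    simp only [Nat.choose_zero_right, Nat.cast_one, one_smul, Nat.sub_zero]
    rw [← e1, e2]
    abel

lemma Spow_mul_vanish (a b : ℕ) (P Q : MvPolynomial ℕ K)
    (hP : ∀ m, a < m → ((Sder K).toLinearMap ^ m) P = 0)
    (hQ : ∀ m, b < m → ((Sder K).toLinearMap ^ m) Q = 0) :
    ∀ m, a + b < m → ((Sder K).toLinearMap ^ m) (P * Q) = 0 := by
  intro m hm
  rw [Spow_leibniz]
  refine Finset.sum_eq_zero fun k hk => ?_
  by_cases hka : a < k
  · rw [hP k hka, zero_mul, smul_zero]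
  · rw [hQ (m-k) (by omega), mul_zero, smul_zero]

lemma tri {M : Type*} [AddCommMonoid M] (g : ℕ → ℕ → M) (N : ℕ) :
    ∑ m ∈ range N, ∑ k ∈ range (m+1), g k (m-k)
      = ∑ k ∈ range N, ∑ l ∈ range (N-k), g k l := by
  induction N with
  | zero => simp
  | succ N ih =>
    rw [Finset.sum_range_succ, ih,
      Finset.sum_range_succ (fun k => ∑ l ∈ range (N+1-k), g k l) N]
    have h1 : ∀ k ∈ range N, ∑ l ∈ range (N+1-k), g k l
        = ∑ l ∈ range (N-k), g k l + g k (N-k) := by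
      intro k hk
      rw [show N+1-k = (N-k)+1 by have := mem_range.1 hk; omega, Finset.sum_range_succ]
    rw [Finset.sum_congr rfl h1, Finset.sum_add_distrib,
      show N+1-N = 1 by omega, Finset.sum_range_one,
      Finset.sum_range_succ (fun k => g k (N-k)) N, Nat.sub_self]
    abel

lemma Fop_X (s : K) (i : ℕ) :
    aeval (R := K) (phi s) (X i : MvPolynomial ℕ K) = Fop s (i+1) (X i) := by
  simp only [aeval_X]
  rw [Fop, Finset.sum_range_succ, Spow_X_eq_zero (Nat.lt_succ_self i),
    smul_zero, add_zero]
  have hterm : ∀ m ∈ range (i+1),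
      (s^(i+1-m) * ((Nat.factorial m : K))⁻¹) • (((Sder K).toLinearMap ^ m) (X i : MvPolynomial ℕ K))
        = ((i.choose m : K) * s^(i+1-m)) • (X (i-m) : MvPolynomial ℕ K) := by
    intro m hm
    rw [Spow_X, smul_smul, Nat.descFactorial_eq_factorial_mul_choose, Nat.cast_mul]
    congr 1
    have h0 : (Nat.factorial m : K) ≠ 0 := Nat.cast_ne_zero.2 m.factorial_ne_zero
    field_simp
  rw [Finset.sum_congr rfl hterm]
  refine Eq.trans ?_ (Finset.sum_range_reflect
    (fun m => ((i.choose m : K) * s^(i+1-m)) • (X (i-m) : MvPolynomial ℕ K)) (i+1))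
  refine Finset.sum_congr rfl fun j hj => ?_
  have hji : j ≤ i := Nat.lt_succ_iff.mp (mem_range.mp hj)
  rw [show i+1-1-j = i - j by omega, show i+1-(i-j) = j+1 by omega,
    show i - (i-j) = j by omega, Nat.choose_symm hji, MvPolynomial.smul_eq_C_mul]

lemma Fop_mul (s : K) (a b : ℕ) (P Q : MvPolynomial ℕ K)
    (hP : ∀ m, a < m → ((Sder K).toLinearMap ^ m) P = 0)
    (hQ : ∀ m, b < m → ((Sder K).toLinearMap ^ m) Q = 0) :
    Fop s (a+b) (P*Q) = Fop s a P * Fop s b Q := by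
  set g : ℕ → ℕ → MvPolynomial ℕ K := fun k l =>
    (s ^ (a + b - (k + l)) * ((Nat.factorial (k+l) : K))⁻¹ * (((k+l).choose k : K))) •
      ((((Sder K).toLinearMap ^ k) P) * (((Sder K).toLinearMap ^ l) Q)) with hg
  have hg0 : ∀ k l, a < k ∨ b < l → g k l = 0 := by
    intro k l h
    rcases h with h | h
    · simp [hg, hP k h]
    · simp [hg, hQ l h]
  have step1 : Fop s (a+b) (P*Q) = ∑ m ∈ range (a+b+1), ∑ k ∈ range (m+1), g k (m-k) := by
    rw [Fop]
    refine Finset.sum_congr rfl fun m hm => ?_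
    rw [Spow_leibniz, Finset.smul_sum]
    refine Finset.sum_congr rfl fun k hk => ?_
    have hkm : k ≤ m := Nat.lt_succ_iff.mp (mem_range.mp hk)
    rw [smul_smul, hg]
    simp only
    rw [show k + (m-k) = m by omega, mul_assoc]
  have step3 : ∑ k ∈ range (a+b+1), ∑ l ∈ range (a+b+1-k), g k l
      = ∑ k ∈ range (a+1), ∑ l ∈ range (b+1), g k l := by
    have inner : ∀ k ∈ range (a+1),
        ∑ l ∈ range (a+b+1-k), g k l = ∑ l ∈ range (b+1), g k l := by
      intro k hk
      have hk' : k ≤ a := Nat.lt_succ_iff.mp (mem_range.mp hk)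
      refine (Finset.sum_subset (Finset.range_subset_range.2 (by omega)) ?_).symm
      intro l hl hl'
      exact hg0 k l (Or.inr (by simp only [mem_range] at hl'; omega))
    refine Eq.trans ((Finset.sum_subset (Finset.range_subset_range.2 (by omega : a+1 ≤ a+b+1)) ?_).symm)
      (Finset.sum_congr rfl inner)
    intro k hk hk'
    refine Finset.sum_eq_zero fun l hl => hg0 k l (Or.inl ?_)
    simp only [mem_range] at hk'
    omega
  have step4 : Fop s a P * Fop s b Q = ∑ k ∈ range (a+1), ∑ l ∈ range (b+1), g k l := by
    rw [Fop, Fop, Finset.sum_mul_sum]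
    refine Finset.sum_congr rfl fun k hk => Finset.sum_congr rfl fun l hl => ?_
    have hka : k ≤ a := Nat.lt_succ_iff.mp (mem_range.mp hk)
    have hlb : l ≤ b := Nat.lt_succ_iff.mp (mem_range.mp hl)
    rw [smul_mul_smul_comm, hg]
    simp only
    congr 1
    have hfac : ((k+l).choose k : K) * (Nat.factorial k : K) * (Nat.factorial l : K)
        = (Nat.factorial (k+l) : K) := by
      rw [Nat.choose_symm_add]
      exact_mod_cast congrArg (fun t : ℕ => (t : K)) (Nat.add_choose_mul_factorial_mul_factorial k l)
    have h1 : (Nat.factorial k : K) ≠ 0 := Nat.cast_ne_zero.2 k.factorial_ne_zero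
    have h2 : (Nat.factorial l : K) ≠ 0 := Nat.cast_ne_zero.2 l.factorial_ne_zero
    have h3 : (Nat.factorial (k+l) : K) ≠ 0 := Nat.cast_ne_zero.2 (k+l).factorial_ne_zero
    rw [show a+b-(k+l) = (a-k)+(b-l) by omega, pow_add]
    field_simp
    rw [← hfac]
    ring
  rw [step1, tri g (a+b+1), step3, step4]

lemma Fop_smul (s : K) (n : ℕ) (c : K) (P : MvPolynomial ℕ K) :
    Fop s n (c • P) = c • Fop s n P := by
  rw [Fop, Fop, Finset.smul_sum]
  exact Finset.sum_congr rfl fun m _ => by rw [map_smul, smul_comm]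

lemma Fop_sum {ι : Type*} (s : K) (n : ℕ) (t : Finset ι) (f : ι → MvPolynomial ℕ K) :
    Fop s n (∑ v ∈ t, f v) = ∑ v ∈ t, Fop s n (f v) := by
  simp only [Fop, map_sum, Finset.smul_sum]
  exact Finset.sum_comm

lemma key (s : K) (N : ℕ) : ∀ (d : ℕ →₀ ℕ), (d.sum fun _ k => k) = N →
    (∀ m, ((Finsupp.weight (fun i : ℕ => i+1)) d) < m →
      ((Sder K).toLinearMap ^ m) (monomial d (1:K)) = 0)
    ∧ aeval (R := K) (phi s) (monomial d (1:K))
        = Fop s ((Finsupp.weight (fun i : ℕ => i+1)) d) (monomial d 1) := by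
  induction N with
  | zero =>
    intro d hd
    have hd0 : d = 0 := by
      ext i
      by_contra h
      have hi : i ∈ d.support := Finsupp.mem_support_iff.2 h
      have := (Finset.sum_eq_zero_iff.1 hd) i hi
      exact h this
    subst hd0
    have h1 : (monomial (0 : ℕ →₀ ℕ) (1:K)) = 1 := by simp
    have hw : ((Finsupp.weight (fun i : ℕ => i+1)) (0 : ℕ →₀ ℕ)) = 0 := map_zero _
    constructor
    · intro m hm
      rw [h1]
      exact Spow_one_eq_zero (by omega)
    · rw [h1, hw, map_one, Fop]
      simp
  | succ N ih =>
    intro d hd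
    have hne : ∃ i, d i ≠ 0 := by
      by_contra h
      push_neg at h
      have hd0 : d = 0 := Finsupp.ext h
      rw [hd0] at hd
      simp at hd
    obtain ⟨i, hi⟩ := hne
    set d' : ℕ →₀ ℕ := d - Finsupp.single i 1 with hd'
    have hsplit : Finsupp.single i 1 + d' = d := by
      ext j
      simp only [Finsupp.add_apply, hd', Finsupp.tsub_apply, Finsupp.single_apply]
      by_cases h : i = j
      · subst h
        have : 1 ≤ d i := Nat.one_le_iff_ne_zero.2 hi
        simp
        omega
      · simp [h]
    have hsum' : (d'.sum fun _ k => k) = N := by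
      have hcongr := congrArg (fun f : ℕ →₀ ℕ => f.sum fun _ k => k) hsplit
      rw [Finsupp.sum_add_index' (fun _ => rfl) (fun _ _ _ => rfl),
        Finsupp.sum_single_index rfl] at hcongr
      omega
    obtain ⟨ihv, ihe⟩ := ih d' hsum'
    have hX : (X i : MvPolynomial ℕ K) = monomial (Finsupp.single i 1) 1 := rfl
    have hmono : (monomial d (1:K)) = X i * monomial d' 1 := by
      rw [hX, monomial_mul, one_mul, hsplit]
    have hw : (Finsupp.weight (fun i : ℕ => i+1)) d
        = (i+1) + (Finsupp.weight (fun i : ℕ => i+1)) d' := by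
      rw [← hsplit, map_add]
      congr 1
      rw [Finsupp.weight_apply, Finsupp.sum_single_index]
      · simp
      · simp
    have hPvan : ∀ m, i+1 < m → ((Sder K).toLinearMap ^ m) (X i : MvPolynomial ℕ K) = 0 :=
      fun m hm => Spow_X_eq_zero (by omega)
    constructor
    · intro m hm
      rw [hmono]
      exact Spow_mul_vanish (i+1) _ _ _ hPvan ihv m (by rw [hw] at hm; omega)
    · rw [hmono, map_mul, Fop_X, ihe, hw]
      exact (Fop_mul s (i+1) _ _ _ hPvan ihv).symm

end Aux


/-- Lemma 1 of the paper: if `D` is quasi-homogeneous of total weight `n` in the variables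
    `d_i` (with `d_i` of weight `i`, here `X i = d_{i+1}`), then applying the change of
    variables `∂/∂p_i = ∑_{j=1}^{i} C(i−1,j−1) β^{j/2} ∂/∂T_j` to `D` (i.e. substituting
    `d_i ↦ ∑_j C(i−1,j−1) s^j · (∂/∂T_j)`, with `s = β^{1/2}`) is the same as applying
    `β^{n/2} e^{S/√β}` to `D` viewed as a polynomial:
    `aeval φ D = ∑_{m=0}^{n} (s^{n−m}/m!) • S^m D` (the series truncates since `S^m D = 0`
    for `m > n`). -/
theorem change_of_variables_eq_exp_S {K : Type*} [Field K] [CharZero K] (s : K) (hs : s ≠ 0)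
    (n : ℕ) (D : MvPolynomial ℕ K)
    (hD : MvPolynomial.IsWeightedHomogeneous (fun i : ℕ => i + 1) D n) :
    MvPolynomial.aeval
      (fun i : ℕ => ∑ j ∈ Finset.range (i+1),
        MvPolynomial.C ((i.choose j : K) * s^(j+1)) * X j) D
    = ∑ m ∈ Finset.range (n+1),
        (s ^ (n - m) * (Nat.factorial m : K)⁻¹) • (((Sder K).toLinearMap ^ m) D) := by
  show aeval (R := K) (phi s) D = Fop s n D
  conv_lhs => rw [D.as_sum]
  rw [map_sum]
  have step : ∀ v ∈ D.support,
      aeval (R := K) (phi s) (monomial v (coeff v D)) = Fop s n (monomial v (coeff v D)) := by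
    intro v hv
    have hv' : coeff v D ≠ 0 := mem_support_iff.1 hv
    have hwv : (Finsupp.weight (fun i : ℕ => i+1)) v = n := hD hv'
    have hm : (monomial v (coeff v D)) = (coeff v D) • monomial v (1:K) := by
      rw [MvPolynomial.smul_monomial, smul_eq_mul, mul_one]
    rw [hm, map_smul, (key s _ v rfl).2, Fop_smul, hwv]
  rw [Finset.sum_congr rfl step, ← Fop_sum, ← D.as_sum]
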